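/- Empty messages before the shortest-path distance (Observation 1): if there is no walk from s to o of length at most t — in particular, if o is not reachable from s, or if o is reachable and t < dist(s,o) — then the generalized Bellman–Ford iterate satisfies x⁽ᵗ⁾(o) = 0. Consequently, a model run for T layers produces the zero representation for every vertex farther than T hops from the source. -/
import Mathlib


open Finset

/-- The weight of a walk: the product of the edge weights `wt v_{i-1} v_i` along the
walk, with the length-0 walk having weight 1. -/
def SimpleGraph.Walk.weight {V : Type*} {G : SimpleGraph V} {R : Type*} [CommSemiring R]
    (wt : V → V → R) {u v : V} (p : G.Walk u v) : R :=
  (p.darts.map fun d => wt d.fst d.snd).prod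

/-- `pathSum G wt t s o = ∑_{p ∈ P_t(s,o)} weight(p)`, the sum of the weights of all
walks of length `t` from `s` to `o` in `G`. -/
def pathSum {V : Type*} [Fintype V] [DecidableEq V] (G : SimpleGraph V) [DecidableRel G.Adj]
    {R : Type*} [CommSemiring R] (wt : V → V → R) (t : ℕ) (s o : V) : R :=
  ∑ p ∈ G.finsetWalkLength t s o, p.weight wt

/-- The generalized Bellman–Ford iterates `x⁽ᵗ⁾` with source `s`:
`x⁽⁰⁾(o) = 1` if `o = s` and `0` otherwise, and
`x⁽ᵗ⁾(o) = (∑_{u adjacent to o} x⁽ᵗ⁻¹⁾(u) * wt u o) + x⁽⁰⁾(o)` for `t ≥ 1`. -/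
def genBF {V : Type*} [Fintype V] [DecidableEq V] (G : SimpleGraph V) [DecidableRel G.Adj]
    {R : Type*} [CommSemiring R] (wt : V → V → R) (s : V) : ℕ → V → R
  | 0 => fun o => if o = s then 1 else 0
  | (t + 1) => fun o =>
      (∑ u ∈ G.neighborFinset o, genBF G wt s t u * wt u o) + (if o = s then 1 else 0)

/-- Empty messages before the shortest-path distance: if there is no
walk from `s` to `o` of length at most `t` — in particular, if `o` is not reachable
from `s`, or if `o` is reachable and `t < dist(s,o)` — then the generalized
Bellman–Ford iterate satisfies `x⁽ᵗ⁾(o) = 0`. -/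
theorem genBF_eq_zero_of_no_short_walk {V : Type*} [Fintype V] [DecidableEq V]
    (G : SimpleGraph V) [DecidableRel G.Adj] {R : Type*} [CommSemiring R]
    (wt : V → V → R) (s : V) (t : ℕ) (o : V)
    (h : ¬ ∃ p : G.Walk s o, p.length ≤ t) :
    genBF G wt s t o = 0 := by
  induction t generalizing o with
  | zero =>
    have hne : o ≠ s := by
      rintro rfl
      exact h ⟨SimpleGraph.Walk.nil, le_refl _⟩
    simp [genBF, hne]
  | succ t ih =>
    have hne : o ≠ s := by
      rintro rfl
      exact h ⟨SimpleGraph.Walk.nil, Nat.zero_le _⟩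
    simp only [genBF, hne, if_false, add_zero]
    refine Finset.sum_eq_zero fun u hu => ?_
    have hadj : G.Adj u o := by
      simpa [SimpleGraph.mem_neighborFinset] using (SimpleGraph.mem_neighborFinset _ _ _).mp hu |>.symm
    have : ¬ ∃ p : G.Walk s u, p.length ≤ t := by
      rintro ⟨p, hp⟩
      exact h ⟨p.concat hadj, by simpa [SimpleGraph.Walk.length_concat] using Nat.succ_le_succ hp⟩
    rw [ih _ this, zero_mul]
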